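/- arXiv:1912.10640 — 3 statements merged into one kernel-verified Lean document; each statement's English description precedes it below -/
import Mathlib

section
/- Let k, r, and σ̄ > 0 be real constants and let L denote the modified Black–Scholes Asian operator. Fix T > 0 and t₀ < T and suppose kτ ≠ 1 and kτ ≠ 2 for all τ ∈ [t₀, T]. For m = 1, …, n let fₘ : ℝ → ℝ be continuous and let Dₘ : ℝ³ → ℝ be smooth functions satisfying (L Dₘ)(t,s,u) = 0 for all t ∈ (t₀, T] and all s, u ∈ ℝ. Define A(t,s,u) = − Σ_{m=1}^{n} ( ∫_t^T fₘ(τ) · 2(1 − kτ)/(2 − kτ)² dτ ) · Dₘ(t,s,u). Then A(T,s,u) = 0 for all s, u ∈ ℝ, and (L A)(t,s,u) = Σ_{m=1}^{n} fₘ(t) Dₘ(t,s,u) for all t ∈ (t₀, T] and all s, u ∈ ℝ. -/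
/-- Partial derivative in the first (time) variable. -/
noncomputable def pdT (F : ℝ → ℝ → ℝ → ℝ) (t s u : ℝ) : ℝ := deriv (fun x => F x s u) t

/-- Partial derivative in the second (log-price) variable. -/
noncomputable def pdS (F : ℝ → ℝ → ℝ → ℝ) (t s u : ℝ) : ℝ := deriv (fun x => F t x u) s

/-- Partial derivative in the third (average) variable. -/
noncomputable def pdU (F : ℝ → ℝ → ℝ → ℝ) (t s u : ℝ) : ℝ := deriv (fun x => F t s x) u

/-- The modified Black–Scholes Asian operator, with `1 + l(t)` where
`l(t) = (1 - k t + k² t²/2)/(1 - k t)`. -/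
noncomputable def LMBS (k r σ : ℝ) (F : ℝ → ℝ → ℝ → ℝ) (t s u : ℝ) : ℝ :=
  (1 + (1 - k * t + k ^ 2 * t ^ 2 / 2) / (1 - k * t)) * pdT F t s u
    + σ ^ 2 / 2 * (pdS (pdS F) t s u - 2 * t * pdS (pdU F) t s u
        + t ^ 2 * pdU (pdU F) t s u)
    + (r - σ ^ 2 / 2) * (pdS F t s u - t * pdU F t s u)
    - r * F t s u

section helpers

variable {F : ℝ → ℝ → ℝ → ℝ}

lemma hasDerivAt_pdT (hF : ContDiff ℝ (⊤ : ℕ∞) (fun p : ℝ × ℝ × ℝ => F p.1 p.2.1 p.2.2)) (t s u : ℝ) :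
    HasDerivAt (fun x => F x s u) (pdT F t s u) t := by
  have h : HasDerivAt (fun x => F x s u)
      (fderiv ℝ (fun p : ℝ × ℝ × ℝ => F p.1 p.2.1 p.2.2) (t, s, u) (1, 0, 0)) t :=
    ((hF.differentiable (by simp) (t, s, u)).hasFDerivAt).comp_hasDerivAt t (f := fun x => (x, s, u))
      ((hasDerivAt_id t).prodMk ((hasDerivAt_const t s).prodMk (hasDerivAt_const t u)))
  have he : pdT F t s u = _ := h.deriv
  rw [he]; exact h

lemma hasDerivAt_pdS (hF : ContDiff ℝ (⊤ : ℕ∞) (fun p : ℝ × ℝ × ℝ => F p.1 p.2.1 p.2.2)) (t s u : ℝ) :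
    HasDerivAt (fun x => F t x u) (pdS F t s u) s := by
  have h : HasDerivAt (fun x => F t x u)
      (fderiv ℝ (fun p : ℝ × ℝ × ℝ => F p.1 p.2.1 p.2.2) (t, s, u) (0, 1, 0)) s :=
    ((hF.differentiable (by simp) (t, s, u)).hasFDerivAt).comp_hasDerivAt s (f := fun x => (t, x, u))
      ((hasDerivAt_const s t).prodMk ((hasDerivAt_id s).prodMk (hasDerivAt_const s u)))
  have he : pdS F t s u = _ := h.deriv
  rw [he]; exact h

lemma hasDerivAt_pdU (hF : ContDiff ℝ (⊤ : ℕ∞) (fun p : ℝ × ℝ × ℝ => F p.1 p.2.1 p.2.2)) (t s u : ℝ) :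
    HasDerivAt (fun x => F t s x) (pdU F t s u) u := by
  have h : HasDerivAt (fun x => F t s x)
      (fderiv ℝ (fun p : ℝ × ℝ × ℝ => F p.1 p.2.1 p.2.2) (t, s, u) (0, 0, 1)) u :=
    ((hF.differentiable (by simp) (t, s, u)).hasFDerivAt).comp_hasDerivAt u (f := fun x => (t, s, x))
      ((hasDerivAt_const u t).prodMk ((hasDerivAt_const u s).prodMk (hasDerivAt_id u)))
  have he : pdU F t s u = _ := h.deriv
  rw [he]; exact h

lemma contDiff_fderiv_apply (hF : ContDiff ℝ (⊤ : ℕ∞) (fun p : ℝ × ℝ × ℝ => F p.1 p.2.1 p.2.2))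
    (v : ℝ × ℝ × ℝ) :
    ContDiff ℝ (⊤ : ℕ∞) (fun p : ℝ × ℝ × ℝ =>
      fderiv ℝ (fun q : ℝ × ℝ × ℝ => F q.1 q.2.1 q.2.2) p v) :=
  (hF.fderiv_right (by simp)).clm_apply contDiff_const

lemma contDiff_pdS (hF : ContDiff ℝ (⊤ : ℕ∞) (fun p : ℝ × ℝ × ℝ => F p.1 p.2.1 p.2.2)) :
    ContDiff ℝ (⊤ : ℕ∞) (fun p : ℝ × ℝ × ℝ => pdS F p.1 p.2.1 p.2.2) := by
  have h : ∀ p : ℝ × ℝ × ℝ, pdS F p.1 p.2.1 p.2.2 =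
      fderiv ℝ (fun q : ℝ × ℝ × ℝ => F q.1 q.2.1 q.2.2) p (0, 1, 0) := by
    intro p
    have h : HasDerivAt (fun x => F p.1 x p.2.2)
        (fderiv ℝ (fun q : ℝ × ℝ × ℝ => F q.1 q.2.1 q.2.2) p (0, 1, 0)) p.2.1 :=
      ((hF.differentiable (by simp) p).hasFDerivAt).comp_hasDerivAt p.2.1 (f := fun x => (p.1, x, p.2.2))
        ((hasDerivAt_const p.2.1 p.1).prodMk
          ((hasDerivAt_id p.2.1).prodMk (hasDerivAt_const p.2.1 p.2.2)))
    exact h.deriv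
  simp only [h]
  exact contDiff_fderiv_apply hF _

lemma contDiff_pdU (hF : ContDiff ℝ (⊤ : ℕ∞) (fun p : ℝ × ℝ × ℝ => F p.1 p.2.1 p.2.2)) :
    ContDiff ℝ (⊤ : ℕ∞) (fun p : ℝ × ℝ × ℝ => pdU F p.1 p.2.1 p.2.2) := by
  have h : ∀ p : ℝ × ℝ × ℝ, pdU F p.1 p.2.1 p.2.2 =
      fderiv ℝ (fun q : ℝ × ℝ × ℝ => F q.1 q.2.1 q.2.2) p (0, 0, 1) := by
    intro p
    have h : HasDerivAt (fun x => F p.1 p.2.1 x)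
        (fderiv ℝ (fun q : ℝ × ℝ × ℝ => F q.1 q.2.1 q.2.2) p (0, 0, 1)) p.2.2 :=
      ((hF.differentiable (by simp) p).hasFDerivAt).comp_hasDerivAt p.2.2 (f := fun x => (p.1, p.2.1, x))
        ((hasDerivAt_const p.2.2 p.1).prodMk
          ((hasDerivAt_const p.2.2 p.2.1).prodMk (hasDerivAt_id p.2.2)))
    exact h.deriv
  simp only [h]
  exact contDiff_fderiv_apply hF _

end helpers

theorem stmt0 (k r σ T t₀ : ℝ) (hσ : 0 < σ) (hT : 0 < T) (ht₀ : t₀ < T)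
    (hk : ∀ τ ∈ Set.Icc t₀ T, k * τ ≠ 1 ∧ k * τ ≠ 2)
    (n : ℕ) (f : Fin n → ℝ → ℝ) (hf : ∀ m, Continuous (f m))
    (D : Fin n → ℝ → ℝ → ℝ → ℝ)
    (hD : ∀ m, ContDiff ℝ (⊤ : ℕ∞) (fun p : ℝ × ℝ × ℝ => D m p.1 p.2.1 p.2.2))
    (hLD : ∀ m, ∀ t ∈ Set.Ioc t₀ T, ∀ s u : ℝ, LMBS k r σ (D m) t s u = 0)
    (A : ℝ → ℝ → ℝ → ℝ)
    (hA : ∀ t s u : ℝ,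
      A t s u = -∑ m, (∫ τ in t..T, f m τ * (2 * (1 - k * τ) / (2 - k * τ) ^ 2)) * D m t s u) :
    (∀ s u : ℝ, A T s u = 0) ∧
    (∀ t ∈ Set.Ioc t₀ T, ∀ s u : ℝ,
      LMBS k r σ A t s u = ∑ m, f m t * D m t s u) := by
  set w : ℝ → ℝ := fun τ => 2 * (1 - k * τ) / (2 - k * τ) ^ 2 with hw
  set g : Fin n → ℝ → ℝ := fun m x => ∫ τ in x..T, f m τ * w τ with hg
  have hA' : ∀ t s u : ℝ, A t s u = -∑ m, g m t * D m t s u := hA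
  constructor
  · intro s u
    rw [hA']
    simp [hg, intervalIntegral.integral_same]
  · intro t ht s u
    -- the open set where the weight is continuous
    set S : Set ℝ := {τ : ℝ | 2 - k * τ ≠ 0} with hS
    have hopen : IsOpen S := isOpen_compl_singleton.preimage (by continuity)
    have hsub : Set.Icc t₀ T ⊆ S := by
      intro τ hτ
      have h2 := (hk τ hτ).2
      simp only [hS, Set.mem_setOf_eq]
      intro h0; apply h2; linarith
    have htmem : t ∈ Set.Icc t₀ T := ⟨le_of_lt ht.1, ht.2⟩
    have htS : t ∈ S := hsub htmem
    have hdenom : ∀ τ ∈ S, (2 - k * τ) ^ 2 ≠ 0 := fun τ hτ => pow_ne_zero _ hτ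
    have hcont : ∀ m, ContinuousOn (fun τ => f m τ * w τ) S := by
      intro m
      apply (hf m).continuousOn.mul
      exact (continuousOn_const.mul (continuousOn_const.sub
        (continuousOn_const.mul continuousOn_id))).div
        ((continuousOn_const.sub (continuousOn_const.mul continuousOn_id)).pow 2) hdenom
    -- derivative of the coefficient functions
    have hgd : ∀ m, HasDerivAt (g m) (-(f m t * w t)) t := by
      intro m
      have hint : IntervalIntegrable (fun τ => f m τ * w τ) MeasureTheory.volume T t := by
        apply ContinuousOn.intervalIntegrable
        apply (hcont m).mono
        rw [Set.uIcc_of_ge ht.2]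
        exact le_trans (Set.Icc_subset_Icc_left (le_of_lt ht.1)) hsub
      have hmeas : StronglyMeasurableAtFilter (fun τ => f m τ * w τ) (nhds t)
          MeasureTheory.volume :=
        AEStronglyMeasurable.stronglyMeasurableAtFilter_of_mem
          ((hcont m).aestronglyMeasurable hopen.measurableSet) (hopen.mem_nhds htS)
      have hca : ContinuousAt (fun τ => f m τ * w τ) t :=
        (hcont m).continuousAt (hopen.mem_nhds htS)
      have h1 : HasDerivAt (fun x => ∫ τ in T..x, f m τ * w τ) (f m t * w t) t :=
        intervalIntegral.integral_hasDerivAt_right hint hmeas hca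
      have h2 := h1.neg
      have : g m = fun x => -∫ τ in T..x, f m τ * w τ := by
        funext x
        rw [hg]
        exact intervalIntegral.integral_symm T x
      rw [this]
      exact h2
    -- first-order partials of A, at arbitrary points
    have hpS : ∀ t' s' u' : ℝ, pdS A t' s' u' = -∑ m, g m t' * pdS (D m) t' s' u' := by
      intro t' s' u'
      have hfun : (fun x => A t' x u') = fun x => -∑ m, g m t' * D m t' x u' :=
        funext fun x => hA' t' x u'
      have h : HasDerivAt (fun x => A t' x u') (-∑ m, g m t' * pdS (D m) t' s' u') s' := by
        rw [hfun]
        exact (HasDerivAt.fun_sum fun m _ =>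
          (hasDerivAt_pdS (hD m) t' s' u').const_mul (g m t')).neg
      exact h.deriv
    have hpU : ∀ t' s' u' : ℝ, pdU A t' s' u' = -∑ m, g m t' * pdU (D m) t' s' u' := by
      intro t' s' u'
      have hfun : (fun x => A t' s' x) = fun x => -∑ m, g m t' * D m t' s' x :=
        funext fun x => hA' t' s' x
      have h : HasDerivAt (fun x => A t' s' x) (-∑ m, g m t' * pdU (D m) t' s' u') u' := by
        rw [hfun]
        exact (HasDerivAt.fun_sum fun m _ =>
          (hasDerivAt_pdU (hD m) t' s' u').const_mul (g m t')).neg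
      exact h.deriv
    -- second-order partials of A
    have hpSS : pdS (pdS A) t s u = -∑ m, g m t * pdS (pdS (D m)) t s u := by
      have hfun : (fun x => pdS A t x u) = fun x => -∑ m, g m t * pdS (D m) t x u :=
        funext fun x => hpS t x u
      have h : HasDerivAt (fun x => pdS A t x u)
          (-∑ m, g m t * pdS (pdS (D m)) t s u) s := by
        rw [hfun]
        exact (HasDerivAt.fun_sum fun m _ =>
          (hasDerivAt_pdS (contDiff_pdS (hD m)) t s u).const_mul (g m t)).neg
      exact h.deriv
    have hpSU : pdS (pdU A) t s u = -∑ m, g m t * pdS (pdU (D m)) t s u := by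
      have hfun : (fun x => pdU A t x u) = fun x => -∑ m, g m t * pdU (D m) t x u :=
        funext fun x => hpU t x u
      have h : HasDerivAt (fun x => pdU A t x u)
          (-∑ m, g m t * pdS (pdU (D m)) t s u) s := by
        rw [hfun]
        exact (HasDerivAt.fun_sum fun m _ =>
          (hasDerivAt_pdS (contDiff_pdU (hD m)) t s u).const_mul (g m t)).neg
      exact h.deriv
    have hpUU : pdU (pdU A) t s u = -∑ m, g m t * pdU (pdU (D m)) t s u := by
      have hfun : (fun x => pdU A t s x) = fun x => -∑ m, g m t * pdU (D m) t s x :=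
        funext fun x => hpU t s x
      have h : HasDerivAt (fun x => pdU A t s x)
          (-∑ m, g m t * pdU (pdU (D m)) t s u) u := by
        rw [hfun]
        exact (HasDerivAt.fun_sum fun m _ =>
          (hasDerivAt_pdU (contDiff_pdU (hD m)) t s u).const_mul (g m t)).neg
      exact h.deriv
    -- time partial of A
    have hpT : pdT A t s u
        = -∑ m, (-(f m t * w t) * D m t s u + g m t * pdT (D m) t s u) := by
      have hfun : (fun x => A x s u) = fun x => -∑ m, g m x * D m x s u :=
        funext fun x => hA' x s u
      have h : HasDerivAt (fun x => A x s u)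
          (-∑ m, (-(f m t * w t) * D m t s u + g m t * pdT (D m) t s u)) t := by
        rw [hfun]
        exact (HasDerivAt.fun_sum fun m _ =>
          (hgd m).mul (hasDerivAt_pdT (hD m) t s u)).neg
      exact h.deriv
    -- the key algebraic identity for the weight
    have h1 : 1 - k * t ≠ 0 := by
      have := (hk t htmem).1; intro h0; apply this; linarith
    have h2 : 2 - k * t ≠ 0 := by
      have := (hk t htmem).2; intro h0; apply this; linarith
    have hlw : (1 + (1 - k * t + k ^ 2 * t ^ 2 / 2) / (1 - k * t)) * w t = 1 := by
      rw [hw]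
      field_simp
      ring
    -- put everything together
    rw [LMBS, hpT, hpS t s u, hpU t s u, hpSS, hpSU, hpUU, hA' t s u]
    simp only [neg_sub, mul_neg, neg_neg, Finset.mul_sum, ← Finset.sum_neg_distrib,
      ← Finset.sum_add_distrib, ← Finset.sum_sub_distrib]
    refine Finset.sum_congr rfl fun m _ => ?_
    have hD0 := hLD m t ht s u
    rw [LMBS] at hD0
    set c := (1 + (1 - k * t + k ^ 2 * t ^ 2 / 2) / (1 - k * t)) with hc
    linear_combination (-(g m t)) * hD0 + (f m t * D m t s u) * hlw
end

section
/- Let k > 0, r ∈ ℝ, σ̄ > 0, M ∈ ℝ and T > 0, and let t₀ < T be such that 0 < 1 − kτ and 0 < 2 − kτ for all τ ∈ [t₀, T]. Let B : ℝ³ → ℝ be smooth and satisfy, for all t ∈ [t₀, T] and s, u ∈ ℝ, both the Black–Scholes Asian equation ∂B/∂t + (σ̄²/2)(∂²B/∂s² − 2t ∂²B/∂s∂u + t² ∂²B/∂u²) + (r − σ̄²/2)(∂B/∂s − t ∂B/∂u) − r B = 0 and the relation ∂B/∂t (t,s,u) = M B(t,s,u). Define γ(t) = [ ((2 − kT)/(2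 − kt))^{2/k} · exp( (T − t)((2 − kt)(2 − kT) + 2)/((2 − kt)(2 − kT)) ) ]^M and C(t,s,u) = γ(t) B(t,s,u). Then γ(T) = 1, C(T,s,u) = B(T,s,u), and C satisfies the modified Black–Scholes Asian equation (L C)(t,s,u) = 0 for all t ∈ [t₀, T] and s, u ∈ ℝ. -/
theorem stmt18 (k r σ M T t₀ : ℝ) (hk : 0 < k) (hσ : 0 < σ) (hT : 0 < T) (ht₀ : t₀ < T)
    (hpos : ∀ τ ∈ Set.Icc t₀ T, 0 < 1 - k * τ ∧ 0 < 2 - k * τ)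
    (B : ℝ → ℝ → ℝ → ℝ)
    (hB : ContDiff ℝ (⊤ : ℕ∞) (fun p : ℝ × ℝ × ℝ => B p.1 p.2.1 p.2.2))
    (hBS : ∀ t ∈ Set.Icc t₀ T, ∀ s u : ℝ,
      pdT B t s u
        + σ ^ 2 / 2 * (pdS (pdS B) t s u - 2 * t * pdS (pdU B) t s u
            + t ^ 2 * pdU (pdU B) t s u)
        + (r - σ ^ 2 / 2) * (pdS B t s u - t * pdU B t s u) - r * B t s u = 0)
    (hBt : ∀ t ∈ Set.Icc t₀ T, ∀ s u : ℝ, pdT B t s u = M * B t s u)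
    (γ : ℝ → ℝ)
    (hγ : ∀ t : ℝ, γ t = (((2 - k * T) / (2 - k * t)) ^ (2 / k) *
      Real.exp ((T - t) * ((2 - k * t) * (2 - k * T) + 2) /
        ((2 - k * t) * (2 - k * T)))) ^ M)
    (C : ℝ → ℝ → ℝ → ℝ) (hC : ∀ t s u : ℝ, C t s u = γ t * B t s u) :
    γ T = 1 ∧ (∀ s u : ℝ, C T s u = B T s u) ∧
      (∀ t ∈ Set.Icc t₀ T, ∀ s u : ℝ, LMBS k r σ C t s u = 0) := by
  have hkne : k ≠ 0 := hk.ne'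
  have hTmem : T ∈ Set.Icc t₀ T := ⟨ht₀.le, le_refl T⟩
  have h2T : 0 < 2 - k * T := (hpos T hTmem).2
  have hγT : γ T = 1 := by
    rw [hγ, div_self h2T.ne', Real.one_rpow, sub_self, zero_mul, zero_div,
      Real.exp_zero, mul_one, Real.one_rpow]
  refine ⟨hγT, fun s u => by rw [hC, hγT, one_mul], ?_⟩
  -- the uncurried function and its partial derivatives
  set F : ℝ × ℝ × ℝ → ℝ := fun p => B p.1 p.2.1 p.2.2 with hF
  have hFd : Differentiable ℝ F := hB.differentiable (by simp)
  have lineT : ∀ a b c : ℝ, HasDerivAt (fun x => B x b c)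
      (fderiv ℝ F (a,b,c) ((1:ℝ),(0:ℝ),(0:ℝ))) a := by
    intro a b c
    have hg : HasDerivAt (fun x : ℝ => ((x, b, c) : ℝ × ℝ × ℝ)) (1,0,0) a :=
      (hasDerivAt_id a).prodMk ((hasDerivAt_const a b).prodMk (hasDerivAt_const a c))
    exact (hFd (a,b,c)).hasFDerivAt.comp_hasDerivAt a hg
  have lineS : ∀ a b c : ℝ, HasDerivAt (fun x => B a x c)
      (fderiv ℝ F (a,b,c) ((0:ℝ),(1:ℝ),(0:ℝ))) b := by
    intro a b c
    have hg : HasDerivAt (fun x : ℝ => ((a, x, c) : ℝ × ℝ × ℝ)) (0,1,0) b :=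
      (hasDerivAt_const b a).prodMk ((hasDerivAt_id b).prodMk (hasDerivAt_const b c))
    exact (hFd (a,b,c)).hasFDerivAt.comp_hasDerivAt b hg
  have lineU : ∀ a b c : ℝ, HasDerivAt (fun x => B a b x)
      (fderiv ℝ F (a,b,c) ((0:ℝ),(0:ℝ),(1:ℝ))) c := by
    intro a b c
    have hg : HasDerivAt (fun x : ℝ => ((a, b, x) : ℝ × ℝ × ℝ)) (0,0,1) c :=
      (hasDerivAt_const c a).prodMk ((hasDerivAt_const c b).prodMk (hasDerivAt_id c))
    exact (hFd (a,b,c)).hasFDerivAt.comp_hasDerivAt c hg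
  have pdT_eq : ∀ a b c : ℝ, pdT B a b c = fderiv ℝ F (a,b,c) ((1:ℝ),(0:ℝ),(0:ℝ)) :=
    fun a b c => (lineT a b c).deriv
  have pdS_eq : ∀ a b c : ℝ, pdS B a b c = fderiv ℝ F (a,b,c) ((0:ℝ),(1:ℝ),(0:ℝ)) :=
    fun a b c => (lineS a b c).deriv
  have pdU_eq : ∀ a b c : ℝ, pdU B a b c = fderiv ℝ F (a,b,c) ((0:ℝ),(0:ℝ),(1:ℝ)) :=
    fun a b c => (lineU a b c).deriv
  have key : ∀ v : ℝ × ℝ × ℝ, ContDiff ℝ (⊤ : ℕ∞) (fun p : ℝ×ℝ×ℝ => fderiv ℝ F p v) :=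
    fun v => (hB.fderiv_right (by simp)).clm_apply contDiff_const
  have sliceS : ∀ (g : ℝ×ℝ×ℝ → ℝ), ContDiff ℝ (⊤ : ℕ∞) g →
      ∀ a b c : ℝ, DifferentiableAt ℝ (fun x => g (a,x,c)) b := by
    intro g hg a b c
    exact ((hg.comp (contDiff_const.prodMk (contDiff_id.prodMk contDiff_const))).differentiable
      (by simp)) b
  have sliceU : ∀ (g : ℝ×ℝ×ℝ → ℝ), ContDiff ℝ (⊤ : ℕ∞) g →
      ∀ a b c : ℝ, DifferentiableAt ℝ (fun x => g (a,b,x)) c := by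
    intro g hg a b c
    exact ((hg.comp (contDiff_const.prodMk (contDiff_const.prodMk contDiff_id))).differentiable
      (by simp)) c
  -- first spatial derivatives of C
  have hCs : ∀ a b c : ℝ, pdS C a b c = γ a * pdS B a b c := by
    intro a b c
    have h1 : (fun x => C a x c) = fun x => γ a * B a x c := funext fun x => hC a x c
    unfold pdS
    rw [h1, deriv_const_mul _ (lineS a b c).differentiableAt]
  have hCu : ∀ a b c : ℝ, pdU C a b c = γ a * pdU B a b c := by
    intro a b c
    have h1 : (fun x => C a b x) = fun x => γ a * B a b x := funext fun x => hC a b x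
    unfold pdU
    rw [h1, deriv_const_mul _ (lineU a b c).differentiableAt]
  -- second spatial derivatives of C
  have hdS : ∀ a b c : ℝ, DifferentiableAt ℝ (fun x => pdS B a x c) b := by
    intro a b c
    have h1 : (fun x => pdS B a x c) = fun x => fderiv ℝ F (a,x,c) ((0:ℝ),(1:ℝ),(0:ℝ)) :=
      funext fun x => pdS_eq a x c
    rw [h1]; exact sliceS _ (key _) a b c
  have hdUS : ∀ a b c : ℝ, DifferentiableAt ℝ (fun x => pdU B a x c) b := by
    intro a b c
    have h1 : (fun x => pdU B a x c) = fun x => fderiv ℝ F (a,x,c) ((0:ℝ),(0:ℝ),(1:ℝ)) :=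
      funext fun x => pdU_eq a x c
    rw [h1]; exact sliceS _ (key _) a b c
  have hdUU : ∀ a b c : ℝ, DifferentiableAt ℝ (fun x => pdU B a b x) c := by
    intro a b c
    have h1 : (fun x => pdU B a b x) = fun x => fderiv ℝ F (a,b,x) ((0:ℝ),(0:ℝ),(1:ℝ)) :=
      funext fun x => pdU_eq a b x
    rw [h1]; exact sliceU _ (key _) a b c
  have hCss : ∀ a b c : ℝ, pdS (pdS C) a b c = γ a * pdS (pdS B) a b c := by
    intro a b c
    have h1 : (fun x => pdS C a x c) = fun x => γ a * pdS B a x c :=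
      funext fun x => hCs a x c
    show deriv (fun x => pdS C a x c) b = _
    rw [h1, deriv_const_mul _ (hdS a b c)]
    rfl
  have hCsu : ∀ a b c : ℝ, pdS (pdU C) a b c = γ a * pdS (pdU B) a b c := by
    intro a b c
    have h1 : (fun x => pdU C a x c) = fun x => γ a * pdU B a x c :=
      funext fun x => hCu a x c
    show deriv (fun x => pdU C a x c) b = _
    rw [h1, deriv_const_mul _ (hdUS a b c)]
    rfl
  have hCuu : ∀ a b c : ℝ, pdU (pdU C) a b c = γ a * pdU (pdU B) a b c := by
    intro a b c
    have h1 : (fun x => pdU C a b x) = fun x => γ a * pdU B a b x :=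
      funext fun x => hCu a b x
    show deriv (fun x => pdU C a b x) c = _
    rw [h1, deriv_const_mul _ (hdUU a b c)]
    rfl
  -- the exponential form of γ and its derivative
  set φ : ℝ → ℝ := fun x => (2/k * Real.log ((2 - k*T)/(2 - k*x)) +
      (T - x) * ((2 - k*x)*(2 - k*T) + 2) / ((2 - k*x)*(2 - k*T))) * M with hφdef
  have hγexp : ∀ x : ℝ, 0 < 2 - k * x → γ x = Real.exp (φ x) := by
    intro x hx
    have ha : 0 < (2 - k*T)/(2 - k*x) := div_pos h2T hx
    rw [hγ, Real.rpow_def_of_pos ha, ← Real.exp_add,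
      Real.rpow_def_of_pos (Real.exp_pos _), Real.log_exp]
    congr 1
    ring
  intro t ht s u
  have h1t : 0 < 1 - k * t := (hpos t ht).1
  have h2t : 0 < 2 - k * t := (hpos t ht).2
  have hA : HasDerivAt (fun x : ℝ => 2 - k * x) (-k) t := by
    simpa using ((hasDerivAt_id t).const_mul k).const_sub 2
  have hlog : HasDerivAt (fun x => Real.log ((2 - k*T)/(2 - k*x))) (k / (2 - k*t)) t := by
    have h0 := ((hasDerivAt_const t (2 - k*T)).fun_div hA h2t.ne').log (div_pos h2T h2t).ne'
    convert h0 using 1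
    field_simp
    ring
  have hh : HasDerivAt (fun x => (T - x) * ((2 - k*x)*(2 - k*T) + 2) / ((2 - k*x)*(2 - k*T)))
      (-1 - 2/((2 - k*t)*(2 - k*T)) + 2*k*(T - t)/((2 - k*t)^2*(2 - k*T))) t := by
    have h1 : HasDerivAt (fun x : ℝ => T - x) (-1) t := by
      simpa using (hasDerivAt_id t).const_sub T
    have h2 : HasDerivAt (fun x : ℝ => (2 - k*x)*(2 - k*T) + 2) (-k*(2 - k*T)) t := by
      simpa using (hA.mul_const (2 - k*T)).add_const 2
    have hN : HasDerivAt (fun x : ℝ => (T - x) * ((2 - k*x)*(2 - k*T) + 2))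
        ((-1) * ((2 - k*t)*(2 - k*T) + 2) + (T - t) * (-k*(2 - k*T))) t := h1.mul h2
    have hD : HasDerivAt (fun x : ℝ => (2 - k*x)*(2 - k*T)) (-k*(2 - k*T)) t := by
      simpa using hA.mul_const (2 - k*T)
    have h0 := hN.fun_div hD (mul_pos h2t h2T).ne'
    refine h0.congr_deriv ?_
    field_simp
    ring
  have hφ : HasDerivAt φ (M * (-1 + 2*(1 - k*t)/(2 - k*t)^2)) t := by
    have h0 := ((hlog.const_mul (2/k)).add hh).mul_const M
    refine h0.congr_deriv ?_
    field_simp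
    ring
  have hγd : HasDerivAt γ (Real.exp (φ t) * (M * (-1 + 2*(1 - k*t)/(2 - k*t)^2))) t := by
    have hev : γ =ᶠ[nhds t] fun x => Real.exp (φ x) := by
      have hc : ContinuousAt (fun x : ℝ => 2 - k * x) t := by fun_prop
      filter_upwards [(continuousAt_const (y := (0:ℝ))).eventually_lt hc h2t] with x hx
      exact hγexp x hx
    exact (hφ.exp).congr_of_eventuallyEq hev
  have hγt : γ t = Real.exp (φ t) := hγexp t h2t
  -- time derivative of C
  have hCt : pdT C t s u = Real.exp (φ t) * (M * (-1 + 2*(1 - k*t)/(2 - k*t)^2)) * B t s u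
      + γ t * pdT B t s u := by
    have h1 : (fun x => C x s u) = fun x => γ x * B x s u := funext fun x => hC x s u
    have h2 := (hγd.fun_mul (lineT t s u)).deriv
    unfold pdT
    rw [h1, h2, (lineT t s u).deriv]
  -- assemble
  have hBS' := hBS t ht s u
  rw [hBt t ht s u] at hBS'
  have hid : (1 + (1 - k*t + k^2*t^2/2)/(1 - k*t)) * ((-1 + 2*(1 - k*t)/(2 - k*t)^2) + 1)
      = 1 := by
    field_simp
    ring
  unfold LMBS
  rw [hCt, hCss, hCsu, hCuu, hCs, hCu, hC, hBt t ht s u, hγt]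
  linear_combination Real.exp (φ t) * hBS' + M * B t s u * Real.exp (φ t) * hid
end

section
/- Let k, r, σ̄ > 0, V ∈ ℝ and T > 0 be real constants, let t₀ < T be such that kτ ≠ 1 and kτ ≠ 2 for all τ ∈ [t₀, T], and let L denote the modified Black–Scholes Asian operator. Let C₀ : ℝ³ → ℝ be smooth with (L C₀)(t,s,u) = 0 for all t ∈ (t₀, T] and s, u ∈ ℝ. For m = 1, 2, 3 set Iₘ(t) = ∫_t^T 2τ^m (1 − kτ)/(2 − kτ)² dτ and define C₁(t,s,u) = V [ I₁(t) ∂C₀/∂u − 2 I₂(t) ∂²C₀/∂u² + I₃(t) ∂³C₀/∂u³ ](t,s,u). Then C₁(T,s,u) = 0 for all s, u ∈ ℝ, and (L C₁)(t,s,u) = −V [ t ∂C₀/∂u − 2t² ∂²C₀/∂u² + t³ ∂³C₀/∂u³ ](t,s,u) for all t ∈ (t₀, T] and s, u ∈ ℝ. -/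
noncomputable def Dv (v : ℝ × ℝ × ℝ) (G : ℝ × ℝ × ℝ → ℝ) (p : ℝ × ℝ × ℝ) : ℝ :=
  fderiv ℝ G p v

lemma Dv_contDiff {G : ℝ × ℝ × ℝ → ℝ} (hG : ContDiff ℝ (⊤ : ℕ∞) G) (v : ℝ × ℝ × ℝ) :
    ContDiff ℝ (⊤ : ℕ∞) (Dv v G) :=
  (hG.fderiv_right (by simp)).clm_apply contDiff_const

lemma hasDerivAt_D1 {G : ℝ × ℝ × ℝ → ℝ} (hG : Differentiable ℝ G) (t s u : ℝ) :
    HasDerivAt (fun x => G (x, s, u)) (Dv (1,0,0) G (t,s,u)) t :=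
  (hG (t,s,u)).hasFDerivAt.comp_hasDerivAt t
    ((hasDerivAt_id t).prodMk (hasDerivAt_const t ((s,u) : ℝ × ℝ)))

lemma hasDerivAt_D2 {G : ℝ × ℝ × ℝ → ℝ} (hG : Differentiable ℝ G) (t s u : ℝ) :
    HasDerivAt (fun x => G (t, x, u)) (Dv (0,1,0) G (t,s,u)) s :=
  (hG (t,s,u)).hasFDerivAt.comp_hasDerivAt s
    ((hasDerivAt_const s t).prodMk ((hasDerivAt_id s).prodMk (hasDerivAt_const s u)))

lemma hasDerivAt_D3 {G : ℝ × ℝ × ℝ → ℝ} (hG : Differentiable ℝ G) (t s u : ℝ) :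
    HasDerivAt (fun x => G (t, s, x)) (Dv (0,0,1) G (t,s,u)) u :=
  (hG (t,s,u)).hasFDerivAt.comp_hasDerivAt u
    ((hasDerivAt_const u t).prodMk ((hasDerivAt_const u s).prodMk (hasDerivAt_id u)))

lemma Dv_swap {G : ℝ × ℝ × ℝ → ℝ} (hG : ContDiff ℝ (⊤ : ℕ∞) G) (v w p : ℝ × ℝ × ℝ) :
    Dv v (Dv w G) p = Dv w (Dv v G) p := by
  have hf' : ∀ q, HasFDerivAt G (fderiv ℝ G q) q := fun q =>
    (hG.differentiable (by simp) q).hasFDerivAt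
  have hf'' : HasFDerivAt (fderiv ℝ G) (fderiv ℝ (fderiv ℝ G) p) p :=
    (((hG.fderiv_right (m := (⊤ : ℕ∞)) (by simp)).differentiable (by simp)) p).hasFDerivAt
  have hsymm := second_derivative_symmetric hf' hf'' v w
  have key : ∀ w' v', Dv v' (Dv w' G) p = fderiv ℝ (fderiv ℝ G) p v' w' := by
    intro w' v'
    have h1 : HasFDerivAt (fun q => fderiv ℝ G q w')
        ((ContinuousLinearMap.apply ℝ ℝ w').comp (fderiv ℝ (fderiv ℝ G) p)) p :=
      (ContinuousLinearMap.apply ℝ ℝ w').hasFDerivAt.comp p hf''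
    have hfun : Dv w' G = fun q => fderiv ℝ G q w' := rfl
    show fderiv ℝ (Dv w' G) p v' = _
    rw [hfun, h1.fderiv]
    rfl
  rw [key w v, key v w, hsymm]

lemma pdT_eq {G : ℝ × ℝ × ℝ → ℝ} (hG : Differentiable ℝ G) {F : ℝ → ℝ → ℝ → ℝ}
    (hF : ∀ t s u, F t s u = G (t,s,u)) (t s u : ℝ) :
    pdT F t s u = Dv (1,0,0) G (t,s,u) := by
  have h : (fun x => F x s u) = fun x => G (x,s,u) := funext fun x => hF x s u
  rw [pdT, h]; exact (hasDerivAt_D1 hG t s u).deriv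

lemma pdS_eq {G : ℝ × ℝ × ℝ → ℝ} (hG : Differentiable ℝ G) {F : ℝ → ℝ → ℝ → ℝ}
    (hF : ∀ t s u, F t s u = G (t,s,u)) (t s u : ℝ) :
    pdS F t s u = Dv (0,1,0) G (t,s,u) := by
  have h : (fun x => F t x u) = fun x => G (t,x,u) := funext fun x => hF t x u
  rw [pdS, h]; exact (hasDerivAt_D2 hG t s u).deriv

lemma pdU_eq {G : ℝ × ℝ × ℝ → ℝ} (hG : Differentiable ℝ G) {F : ℝ → ℝ → ℝ → ℝ}
    (hF : ∀ t s u, F t s u = G (t,s,u)) (t s u : ℝ) :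
    pdU F t s u = Dv (0,0,1) G (t,s,u) := by
  have h : (fun x => F t s x) = fun x => G (t,s,x) := funext fun x => hF t s x
  rw [pdU, h]; exact (hasDerivAt_D3 hG t s u).deriv

lemma key_step (k r σ t : ℝ) (H : ℝ × ℝ × ℝ → ℝ) (hH : ContDiff ℝ (⊤ : ℕ∞) H)
    (h : ∀ s u : ℝ,
      (1 + (1 - k * t + k ^ 2 * t ^ 2 / 2) / (1 - k * t)) * Dv (1,0,0) H (t,s,u)
      + σ ^ 2 / 2 * (Dv (0,1,0) (Dv (0,1,0) H) (t,s,u)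
          - 2 * t * Dv (0,1,0) (Dv (0,0,1) H) (t,s,u)
          + t ^ 2 * Dv (0,0,1) (Dv (0,0,1) H) (t,s,u))
      + (r - σ ^ 2 / 2) * (Dv (0,1,0) H (t,s,u) - t * Dv (0,0,1) H (t,s,u))
      - r * H (t,s,u) = 0) :
    ∀ s u : ℝ,
      (1 + (1 - k * t + k ^ 2 * t ^ 2 / 2) / (1 - k * t)) * Dv (1,0,0) (Dv (0,0,1) H) (t,s,u)
      + σ ^ 2 / 2 * (Dv (0,1,0) (Dv (0,1,0) (Dv (0,0,1) H)) (t,s,u)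
          - 2 * t * Dv (0,1,0) (Dv (0,0,1) (Dv (0,0,1) H)) (t,s,u)
          + t ^ 2 * Dv (0,0,1) (Dv (0,0,1) (Dv (0,0,1) H)) (t,s,u))
      + (r - σ ^ 2 / 2) * (Dv (0,1,0) (Dv (0,0,1) H) (t,s,u)
          - t * Dv (0,0,1) (Dv (0,0,1) H) (t,s,u))
      - r * Dv (0,0,1) H (t,s,u) = 0 := by
  intro s u
  have hHd : Differentiable ℝ H := hH.differentiable (by simp)
  have hd1 : Differentiable ℝ (Dv (1,0,0) H) := (Dv_contDiff hH _).differentiable (by simp)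
  have hd2 : Differentiable ℝ (Dv (0,1,0) H) := (Dv_contDiff hH _).differentiable (by simp)
  have hd3 : Differentiable ℝ (Dv (0,0,1) H) := (Dv_contDiff hH _).differentiable (by simp)
  have hd22 : Differentiable ℝ (Dv (0,1,0) (Dv (0,1,0) H)) :=
    (Dv_contDiff (Dv_contDiff hH _) _).differentiable (by simp)
  have hd23 : Differentiable ℝ (Dv (0,1,0) (Dv (0,0,1) H)) :=
    (Dv_contDiff (Dv_contDiff hH _) _).differentiable (by simp)
  have hd33 : Differentiable ℝ (Dv (0,0,1) (Dv (0,0,1) H)) :=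
    (Dv_contDiff (Dv_contDiff hH _) _).differentiable (by simp)
  have hder : HasDerivAt (fun x =>
      (1 + (1 - k * t + k ^ 2 * t ^ 2 / 2) / (1 - k * t)) * Dv (1,0,0) H (t,s,x)
      + σ ^ 2 / 2 * (Dv (0,1,0) (Dv (0,1,0) H) (t,s,x)
          - 2 * t * Dv (0,1,0) (Dv (0,0,1) H) (t,s,x)
          + t ^ 2 * Dv (0,0,1) (Dv (0,0,1) H) (t,s,x))
      + (r - σ ^ 2 / 2) * (Dv (0,1,0) H (t,s,x) - t * Dv (0,0,1) H (t,s,x))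
      - r * H (t,s,x))
      ((1 + (1 - k * t + k ^ 2 * t ^ 2 / 2) / (1 - k * t)) * Dv (0,0,1) (Dv (1,0,0) H) (t,s,u)
      + σ ^ 2 / 2 * (Dv (0,0,1) (Dv (0,1,0) (Dv (0,1,0) H)) (t,s,u)
          - 2 * t * Dv (0,0,1) (Dv (0,1,0) (Dv (0,0,1) H)) (t,s,u)
          + t ^ 2 * Dv (0,0,1) (Dv (0,0,1) (Dv (0,0,1) H)) (t,s,u))
      + (r - σ ^ 2 / 2) * (Dv (0,0,1) (Dv (0,1,0) H) (t,s,u)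
          - t * Dv (0,0,1) (Dv (0,0,1) H) (t,s,u))
      - r * Dv (0,0,1) H (t,s,u)) u := by
    exact ((((hasDerivAt_D3 hd1 t s u).const_mul _).add
      ((((hasDerivAt_D3 hd22 t s u).sub
          ((hasDerivAt_D3 hd23 t s u).const_mul (2 * t))).add
        ((hasDerivAt_D3 hd33 t s u).const_mul (t ^ 2))).const_mul (σ ^ 2 / 2))).add
      (((hasDerivAt_D3 hd2 t s u).sub
        ((hasDerivAt_D3 hd3 t s u).const_mul t)).const_mul (r - σ ^ 2 / 2))).sub
      ((hasDerivAt_D3 hHd t s u).const_mul r)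
  have h0 : deriv (fun x =>
      (1 + (1 - k * t + k ^ 2 * t ^ 2 / 2) / (1 - k * t)) * Dv (1,0,0) H (t,s,x)
      + σ ^ 2 / 2 * (Dv (0,1,0) (Dv (0,1,0) H) (t,s,x)
          - 2 * t * Dv (0,1,0) (Dv (0,0,1) H) (t,s,x)
          + t ^ 2 * Dv (0,0,1) (Dv (0,0,1) H) (t,s,x))
      + (r - σ ^ 2 / 2) * (Dv (0,1,0) H (t,s,x) - t * Dv (0,0,1) H (t,s,x))
      - r * H (t,s,x)) u = 0 := by
    have : (fun x =>
      (1 + (1 - k * t + k ^ 2 * t ^ 2 / 2) / (1 - k * t)) * Dv (1,0,0) H (t,s,x)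
      + σ ^ 2 / 2 * (Dv (0,1,0) (Dv (0,1,0) H) (t,s,x)
          - 2 * t * Dv (0,1,0) (Dv (0,0,1) H) (t,s,x)
          + t ^ 2 * Dv (0,0,1) (Dv (0,0,1) H) (t,s,x))
      + (r - σ ^ 2 / 2) * (Dv (0,1,0) H (t,s,x) - t * Dv (0,0,1) H (t,s,x))
      - r * H (t,s,x)) = fun _ => (0:ℝ) := funext fun x => h s x
    rw [this]; exact deriv_const u 0
  have hE := hder.deriv.symm.trans h0
  -- swap lemmas
  have e23 : Dv (0,1,0) (Dv (0,0,1) H) = Dv (0,0,1) (Dv (0,1,0) H) :=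
    funext (Dv_swap hH _ _)
  have a1 : Dv (1,0,0) (Dv (0,0,1) H) (t,s,u) = Dv (0,0,1) (Dv (1,0,0) H) (t,s,u) :=
    Dv_swap hH _ _ _
  have a2 : Dv (0,1,0) (Dv (0,1,0) (Dv (0,0,1) H)) (t,s,u)
      = Dv (0,0,1) (Dv (0,1,0) (Dv (0,1,0) H)) (t,s,u) := by
    rw [e23]
    exact Dv_swap (Dv_contDiff hH _) _ _ _
  have a3 : Dv (0,1,0) (Dv (0,0,1) (Dv (0,0,1) H)) (t,s,u)
      = Dv (0,0,1) (Dv (0,1,0) (Dv (0,0,1) H)) (t,s,u) :=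
    Dv_swap (Dv_contDiff hH _) _ _ _
  have a4 : Dv (0,1,0) (Dv (0,0,1) H) (t,s,u) = Dv (0,0,1) (Dv (0,1,0) H) (t,s,u) :=
    Dv_swap hH _ _ _
  rw [a1, a2, a3, a4]
  linear_combination hE

lemma hasDerivAt_combo2 {H1 H2 H3 : ℝ × ℝ × ℝ → ℝ} (h1 : Differentiable ℝ H1)
    (h2 : Differentiable ℝ H2) (h3 : Differentiable ℝ H3) (V a b c t s u : ℝ) :
    HasDerivAt (fun x => V * (a * H1 (t,x,u) - b * H2 (t,x,u) + c * H3 (t,x,u)))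
      (V * (a * Dv (0,1,0) H1 (t,s,u) - b * Dv (0,1,0) H2 (t,s,u)
        + c * Dv (0,1,0) H3 (t,s,u))) s :=
  ((((hasDerivAt_D2 h1 t s u).const_mul a).sub ((hasDerivAt_D2 h2 t s u).const_mul b)).add
    ((hasDerivAt_D2 h3 t s u).const_mul c)).const_mul V

lemma hasDerivAt_combo3 {H1 H2 H3 : ℝ × ℝ × ℝ → ℝ} (h1 : Differentiable ℝ H1)
    (h2 : Differentiable ℝ H2) (h3 : Differentiable ℝ H3) (V a b c t s u : ℝ) :
    HasDerivAt (fun x => V * (a * H1 (t,s,x) - b * H2 (t,s,x) + c * H3 (t,s,x)))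
      (V * (a * Dv (0,0,1) H1 (t,s,u) - b * Dv (0,0,1) H2 (t,s,u)
        + c * Dv (0,0,1) H3 (t,s,u))) u :=
  ((((hasDerivAt_D3 h1 t s u).const_mul a).sub ((hasDerivAt_D3 h2 t s u).const_mul b)).add
    ((hasDerivAt_D3 h3 t s u).const_mul c)).const_mul V

lemma ftc_left {f : ℝ → ℝ} {t₀ T t : ℝ} (ht : t ∈ Set.Ioc t₀ T)
    (hcont : ContinuousOn f (Set.Icc t₀ T)) (hca : ContinuousAt f t)
    (hm : Measurable f) :
    HasDerivAt (fun x => ∫ τ in x..T, f τ) (-f t) t := by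
  have hsub : Set.uIcc t T ⊆ Set.Icc t₀ T := by
    rw [Set.uIcc_of_le ht.2]
    exact Set.Icc_subset_Icc (le_of_lt ht.1) le_rfl
  have hInt : IntervalIntegrable f MeasureTheory.volume t T :=
    (hcont.mono hsub).intervalIntegrable
  exact intervalIntegral.integral_hasDerivAt_left hInt
    (hm.stronglyMeasurable.stronglyMeasurableAtFilter) hca

theorem stmt19 (k r σ V T t₀ : ℝ) (hk : 0 < k) (hr : 0 < r) (hσ : 0 < σ) (hT : 0 < T)
    (ht₀ : t₀ < T) (hkt : ∀ τ ∈ Set.Icc t₀ T, k * τ ≠ 1 ∧ k * τ ≠ 2)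
    (C₀ : ℝ → ℝ → ℝ → ℝ)
    (hC₀ : ContDiff ℝ (⊤ : ℕ∞) (fun p : ℝ × ℝ × ℝ => C₀ p.1 p.2.1 p.2.2))
    (hL : ∀ t ∈ Set.Ioc t₀ T, ∀ s u : ℝ, LMBS k r σ C₀ t s u = 0)
    (C₁ : ℝ → ℝ → ℝ → ℝ)
    (hC₁ : ∀ t s u : ℝ, C₁ t s u = V * (
      (∫ τ in t..T, 2 * τ * (1 - k * τ) / (2 - k * τ) ^ 2) * pdU C₀ t s u
      - 2 * (∫ τ in t..T, 2 * τ ^ 2 * (1 - k * τ) / (2 - k * τ) ^ 2) *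
          pdU (pdU C₀) t s u
      + (∫ τ in t..T, 2 * τ ^ 3 * (1 - k * τ) / (2 - k * τ) ^ 2) *
          pdU (pdU (pdU C₀)) t s u)) :
    (∀ s u : ℝ, C₁ T s u = 0) ∧
    (∀ t ∈ Set.Ioc t₀ T, ∀ s u : ℝ,
      LMBS k r σ C₁ t s u =
        -V * (t * pdU C₀ t s u - 2 * t ^ 2 * pdU (pdU C₀) t s u
          + t ^ 3 * pdU (pdU (pdU C₀)) t s u)) := by
  constructor
  · intro s u
    rw [hC₁]
    simp [intervalIntegral.integral_same]
  obtain ⟨G, hGdef, hG⟩ : ∃ G : ℝ × ℝ × ℝ → ℝ,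
      (∀ t s u, C₀ t s u = G (t,s,u)) ∧ ContDiff ℝ (⊤ : ℕ∞) G :=
    ⟨_, fun _ _ _ => rfl, hC₀⟩
  obtain ⟨I1, I2, I3, hI1def, hI2def, hI3def⟩ : ∃ I1 I2 I3 : ℝ → ℝ,
      (I1 = fun x => ∫ τ in x..T, 2 * τ * (1 - k * τ) / (2 - k * τ) ^ 2) ∧
      (I2 = fun x => ∫ τ in x..T, 2 * τ ^ 2 * (1 - k * τ) / (2 - k * τ) ^ 2) ∧
      (I3 = fun x => ∫ τ in x..T, 2 * τ ^ 3 * (1 - k * τ) / (2 - k * τ) ^ 2) :=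
    ⟨_, _, _, rfl, rfl, rfl⟩
  have hGd : Differentiable ℝ G := hG.differentiable (by simp)
  have hg1 : ContDiff ℝ (⊤ : ℕ∞) (Dv (0,0,1) G) := Dv_contDiff hG _
  have hg2 : ContDiff ℝ (⊤ : ℕ∞) (Dv (0,0,1) (Dv (0,0,1) G)) := Dv_contDiff hg1 _
  have hg3 : ContDiff ℝ (⊤ : ℕ∞) (Dv (0,0,1) (Dv (0,0,1) (Dv (0,0,1) G))) := Dv_contDiff hg2 _
  have hg4 : ContDiff ℝ (⊤ : ℕ∞) (Dv (0,0,1) (Dv (0,0,1) (Dv (0,0,1) (Dv (0,0,1) G)))) :=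
    Dv_contDiff hg3 _
  have hg1d := hg1.differentiable (by simp)
  have hg2d := hg2.differentiable (by simp)
  have hg3d := hg3.differentiable (by simp)
  have hg4d := hg4.differentiable (by simp)
  -- translations of pdU iterates of C₀
  have hU1 : ∀ a b c, pdU C₀ a b c = Dv (0,0,1) G (a,b,c) := pdU_eq hGd hGdef
  have hU2 : ∀ a b c, pdU (pdU C₀) a b c = Dv (0,0,1) (Dv (0,0,1) G) (a,b,c) :=
    pdU_eq hg1d hU1
  have hU3 : ∀ a b c, pdU (pdU (pdU C₀)) a b c
      = Dv (0,0,1) (Dv (0,0,1) (Dv (0,0,1) G)) (a,b,c) := pdU_eq hg2d hU2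
  -- the PDE for G in Dv form
  have hLf : ∀ t ∈ Set.Ioc t₀ T, ∀ s u : ℝ,
      (1 + (1 - k * t + k ^ 2 * t ^ 2 / 2) / (1 - k * t)) * Dv (1,0,0) G (t,s,u)
      + σ ^ 2 / 2 * (Dv (0,1,0) (Dv (0,1,0) G) (t,s,u)
          - 2 * t * Dv (0,1,0) (Dv (0,0,1) G) (t,s,u)
          + t ^ 2 * Dv (0,0,1) (Dv (0,0,1) G) (t,s,u))
      + (r - σ ^ 2 / 2) * (Dv (0,1,0) G (t,s,u) - t * Dv (0,0,1) G (t,s,u))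
      - r * G (t,s,u) = 0 := by
    intro t ht s u
    have h := hL t ht s u
    have hT0 : ∀ a b c, pdT C₀ a b c = Dv (1,0,0) G (a,b,c) := pdT_eq hGd hGdef
    have hS0 : ∀ a b c, pdS C₀ a b c = Dv (0,1,0) G (a,b,c) := pdS_eq hGd hGdef
    have hSS0 : ∀ a b c, pdS (pdS C₀) a b c = Dv (0,1,0) (Dv (0,1,0) G) (a,b,c) :=
      pdS_eq ((Dv_contDiff hG _).differentiable (by simp)) hS0
    have hSU0 : ∀ a b c, pdS (pdU C₀) a b c = Dv (0,1,0) (Dv (0,0,1) G) (a,b,c) :=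
      pdS_eq hg1d hU1
    simp only [LMBS] at h
    rw [hT0, hS0, hSS0, hSU0, hU1, hU2, hGdef] at h
    exact h
  intro t ht s u
  have k1 := key_step k r σ t G hG (hLf t ht)
  have k2 := key_step k r σ t (Dv (0,0,1) G) hg1 k1
  have k3 := key_step k r σ t (Dv (0,0,1) (Dv (0,0,1) G)) hg2 k2
  -- nonvanishing
  have hmem : t ∈ Set.Icc t₀ T := ⟨le_of_lt ht.1, ht.2⟩
  have hne1 : 1 - k * t ≠ 0 := sub_ne_zero.mpr (Ne.symm (hkt t hmem).1)
  have hne2 : 2 - k * t ≠ 0 := sub_ne_zero.mpr (Ne.symm (hkt t hmem).2)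
  -- FTC derivatives
  have hcont1 : ContinuousOn (fun τ => 2 * τ * (1 - k * τ) / (2 - k * τ) ^ 2)
      (Set.Icc t₀ T) := by
    apply ContinuousOn.div (by fun_prop) (by fun_prop)
    intro τ hτ
    exact pow_ne_zero 2 (sub_ne_zero.mpr (Ne.symm (hkt τ hτ).2))
  have hcont2 : ContinuousOn (fun τ => 2 * τ ^ 2 * (1 - k * τ) / (2 - k * τ) ^ 2)
      (Set.Icc t₀ T) := by
    apply ContinuousOn.div (by fun_prop) (by fun_prop)
    intro τ hτ
    exact pow_ne_zero 2 (sub_ne_zero.mpr (Ne.symm (hkt τ hτ).2))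
  have hcont3 : ContinuousOn (fun τ => 2 * τ ^ 3 * (1 - k * τ) / (2 - k * τ) ^ 2)
      (Set.Icc t₀ T) := by
    apply ContinuousOn.div (by fun_prop) (by fun_prop)
    intro τ hτ
    exact pow_ne_zero 2 (sub_ne_zero.mpr (Ne.symm (hkt τ hτ).2))
  have hpow : ((2 - k * t) ^ 2 : ℝ) ≠ 0 := pow_ne_zero 2 hne2
  have hFTC1 : HasDerivAt I1 (-(2 * t * (1 - k * t) / (2 - k * t) ^ 2)) t := by
    rw [hI1def]
    exact ftc_left ht hcont1
      (ContinuousAt.div (by fun_prop) (by fun_prop) hpow)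
      (Measurable.div (by fun_prop) (by fun_prop))
  have hFTC2 : HasDerivAt I2 (-(2 * t ^ 2 * (1 - k * t) / (2 - k * t) ^ 2)) t := by
    rw [hI2def]
    exact ftc_left ht hcont2
      (ContinuousAt.div (by fun_prop) (by fun_prop) hpow)
      (Measurable.div (by fun_prop) (by fun_prop))
  have hFTC3 : HasDerivAt I3 (-(2 * t ^ 3 * (1 - k * t) / (2 - k * t) ^ 2)) t := by
    rw [hI3def]
    exact ftc_left ht hcont3
      (ContinuousAt.div (by fun_prop) (by fun_prop) hpow)
      (Measurable.div (by fun_prop) (by fun_prop))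
  -- C₁ in Dv form
  have hC₁' : ∀ a b c, C₁ a b c = V * (I1 a * Dv (0,0,1) G (a,b,c)
      - 2 * I2 a * Dv (0,0,1) (Dv (0,0,1) G) (a,b,c)
      + I3 a * Dv (0,0,1) (Dv (0,0,1) (Dv (0,0,1) G)) (a,b,c)) := by
    intro a b c
    rw [hC₁, hU1, hU2, hU3, hI1def, hI2def, hI3def]
  -- first derivatives of C₁
  have hS1 : ∀ a b c, pdS C₁ a b c = V * (I1 a * Dv (0,1,0) (Dv (0,0,1) G) (a,b,c)
      - 2 * I2 a * Dv (0,1,0) (Dv (0,0,1) (Dv (0,0,1) G)) (a,b,c)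
      + I3 a * Dv (0,1,0) (Dv (0,0,1) (Dv (0,0,1) (Dv (0,0,1) G))) (a,b,c)) := by
    intro a b c
    rw [pdS, funext fun x => hC₁' a x c]
    exact (hasDerivAt_combo2 hg1d hg2d hg3d V (I1 a) (2 * I2 a) (I3 a) a b c).deriv
  have hU1' : ∀ a b c, pdU C₁ a b c = V * (I1 a * Dv (0,0,1) (Dv (0,0,1) G) (a,b,c)
      - 2 * I2 a * Dv (0,0,1) (Dv (0,0,1) (Dv (0,0,1) G)) (a,b,c)
      + I3 a * Dv (0,0,1) (Dv (0,0,1) (Dv (0,0,1) (Dv (0,0,1) G)))  (a,b,c)) := by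
    intro a b c
    rw [pdU, funext fun x => hC₁' a b x]
    exact (hasDerivAt_combo3 hg1d hg2d hg3d V (I1 a) (2 * I2 a) (I3 a) a b c).deriv
  -- second derivatives of C₁
  have hSS1 : pdS (pdS C₁) t s u
      = V * (I1 t * Dv (0,1,0) (Dv (0,1,0) (Dv (0,0,1) G)) (t,s,u)
      - 2 * I2 t * Dv (0,1,0) (Dv (0,1,0) (Dv (0,0,1) (Dv (0,0,1) G))) (t,s,u)
      + I3 t * Dv (0,1,0) (Dv (0,1,0) (Dv (0,0,1) (Dv (0,0,1) (Dv (0,0,1) G)))) (t,s,u)) := by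
    rw [pdS, funext fun x => hS1 t x u]
    exact (hasDerivAt_combo2 ((Dv_contDiff hg1 _).differentiable (by simp))
      ((Dv_contDiff hg2 _).differentiable (by simp))
      ((Dv_contDiff hg3 _).differentiable (by simp)) V (I1 t) (2 * I2 t) (I3 t) t s u).deriv
  have hSU1 : pdS (pdU C₁) t s u
      = V * (I1 t * Dv (0,1,0) (Dv (0,0,1) (Dv (0,0,1) G)) (t,s,u)
      - 2 * I2 t * Dv (0,1,0) (Dv (0,0,1) (Dv (0,0,1) (Dv (0,0,1) G))) (t,s,u)
      + I3 t * Dv (0,1,0) (Dv (0,0,1) (Dv (0,0,1) (Dv (0,0,1) (Dv (0,0,1) G)))) (t,s,u)) := by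
    rw [pdS, funext fun x => hU1' t x u]
    exact (hasDerivAt_combo2 hg2d hg3d hg4d V (I1 t) (2 * I2 t) (I3 t) t s u).deriv
  have hUU1 : pdU (pdU C₁) t s u
      = V * (I1 t * Dv (0,0,1) (Dv (0,0,1) (Dv (0,0,1) G)) (t,s,u)
      - 2 * I2 t * Dv (0,0,1) (Dv (0,0,1) (Dv (0,0,1) (Dv (0,0,1) G))) (t,s,u)
      + I3 t * Dv (0,0,1) (Dv (0,0,1) (Dv (0,0,1) (Dv (0,0,1) (Dv (0,0,1) G))))
          (t,s,u)) := by
    rw [pdU, funext fun x => hU1' t s x]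
    exact (hasDerivAt_combo3 hg2d hg3d hg4d V (I1 t) (2 * I2 t) (I3 t) t s u).deriv
  -- time derivative of C₁
  have hT1 : pdT C₁ t s u
      = V * ((-(2 * t * (1 - k * t) / (2 - k * t) ^ 2)) * Dv (0,0,1) G (t,s,u)
          + I1 t * Dv (1,0,0) (Dv (0,0,1) G) (t,s,u)
        - (2 * -(2 * t ^ 2 * (1 - k * t) / (2 - k * t) ^ 2)
              * Dv (0,0,1) (Dv (0,0,1) G) (t,s,u)
            + 2 * I2 t * Dv (1,0,0) (Dv (0,0,1) (Dv (0,0,1) G)) (t,s,u))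
        + ((-(2 * t ^ 3 * (1 - k * t) / (2 - k * t) ^ 2))
              * Dv (0,0,1) (Dv (0,0,1) (Dv (0,0,1) G)) (t,s,u)
            + I3 t * Dv (1,0,0) (Dv (0,0,1) (Dv (0,0,1) (Dv (0,0,1) G))) (t,s,u))) := by
    rw [pdT, funext fun x => hC₁' x s u]
    exact (((((hFTC1.mul (hasDerivAt_D1 hg1d t s u)).sub
      ((hFTC2.const_mul 2).mul (hasDerivAt_D1 hg2d t s u))).add
      (hFTC3.mul (hasDerivAt_D1 hg3d t s u))).const_mul V)).deriv
  -- algebraic identities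
  have hA1 : (1 + (1 - k * t + k ^ 2 * t ^ 2 / 2) / (1 - k * t))
      * (2 * t * (1 - k * t) / (2 - k * t) ^ 2) = t := by
    field_simp
    ring
  have hA2 : (1 + (1 - k * t + k ^ 2 * t ^ 2 / 2) / (1 - k * t))
      * (2 * t ^ 2 * (1 - k * t) / (2 - k * t) ^ 2) = t ^ 2 := by
    field_simp
    ring
  have hA3 : (1 + (1 - k * t + k ^ 2 * t ^ 2 / 2) / (1 - k * t))
      * (2 * t ^ 3 * (1 - k * t) / (2 - k * t) ^ 2) = t ^ 3 := by
    field_simp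
    ring
  simp only [LMBS]
  rw [hT1, hSS1, hSU1, hUU1, hS1 t s u, hU1' t s u, hC₁' t s u,
    hU1 t s u, hU2 t s u, hU3 t s u]
  linear_combination (V * I1 t) * k1 s u - (2 * V * I2 t) * k2 s u
    + (V * I3 t) * k3 s u - (V * Dv (0,0,1) G (t,s,u)) * hA1
    + (2 * V * Dv (0,0,1) (Dv (0,0,1) G) (t,s,u)) * hA2
    - (V * Dv (0,0,1) (Dv (0,0,1) (Dv (0,0,1) G)) (t,s,u)) * hA3
end
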